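/- For all integers n, k with 0 < k ≤ n, the number T_{n,k} of labeled partial k-trees on the vertex set {1,…,n} satisfies T_{n,k} ≥ (n−k+1)^{n−k−1} · 2^{(k−1)(n−k+1)}. -/

import Mathlib

/-- The graph on `Fin (m+1)` obtained from a graph `G` on `Fin m` by adding a new
vertex (the last one) adjacent exactly to the vertices of `S`. -/
def extendGraph {m : ℕ} (G : SimpleGraph (Fin m)) (S : Finset (Fin m)) :
    SimpleGraph (Fin (m + 1)) :=
  SimpleGraph.fromRel fun a b =>
    (∃ a' b' : Fin m, a = Fin.castSucc a' ∧ b = Fin.castSucc b' ∧ G.Adj a' b') ∨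
    (a = Fin.last m ∧ ∃ b' ∈ S, b = Fin.castSucc b')

/-- Graphs produced by the `k`-tree construction process: start from a complete graph on
`k+1` vertices, and iteratively add a new vertex adjacent to exactly `k` existing vertices
that form a clique. -/
inductive IsKTreeConstr (k : ℕ) : (m : ℕ) → SimpleGraph (Fin m) → Prop
  | base : IsKTreeConstr k (k + 1) ⊤
  | step {m : ℕ} {G : SimpleGraph (Fin m)} (hG : IsKTreeConstr k m G)
      (S : Finset (Fin m)) (hcard : S.card = k)
      (hclique : G.IsClique (S : Set (Fin m))) :
      IsKTreeConstr k (m + 1) (extendGraph G S)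

/-- `G` is a partial `k`-tree: a subgraph of some `k`-tree. -/
def IsPartialKTree (k : ℕ) {n : ℕ} (G : SimpleGraph (Fin n)) : Prop :=
  ∃ (m : ℕ) (H : SimpleGraph (Fin m)) (f : Fin n ↪ Fin m),
    IsKTreeConstr k m H ∧ ∀ u v : Fin n, G.Adj u v → H.Adj (f u) (f v)

/-- `T n k`: the number of labeled partial `k`-trees on the vertex set `{1,…,n}`. -/
noncomputable def numPartialKTrees (n k : ℕ) : ℕ :=
  Nat.card {G : SimpleGraph (Fin n) // IsPartialKTree k G}

/-!
Put `k - 1` apexes next to a labelled tree on the other `m = n - k + 1` vertices and join the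
apexes to the tree vertices in any of the `2 ^ ((k - 1) * m)` possible ways. Numbering the tree
vertices so that each comes after its parent, the graph lies inside the `k`-tree that attaches
every tree vertex to the clique formed by the apexes and its parent. The trees come injectively
from the `m ^ (m - 2)` Prüfer codes.
-/

open Finset

def IsParentEdge (p : ℕ → ℕ) (e : Sym2 ℕ) : Prop :=
  ∃ i, 0 < i ∧ e = s(i, p i)

namespace Prufer

variable {α : Type*} [LinearOrder α]

def leaf (a : α) (s : List α) (A : Finset α) : α :=
  (A \ (a :: s).toFinset).min.untopD a

def edges : List α → Finset α → Finset (Sym2 α)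
  | [], A => A.sym2.filter fun e => ¬e.IsDiag -- the single edge left, as `#A = 2` for a code
  | a :: s, A => insert s(leaf a s A, a) (edges s (A.erase (leaf a s A)))

def IsCode (s : List α) (A : Finset α) : Prop :=
  s.length + 2 = #A ∧ ∀ x ∈ s, x ∈ A

variable {a : α} {s t : List α} {A : Finset α}

lemma IsCode.sdiff_nonempty (h : IsCode s A) : (A \ s.toFinset).Nonempty := by
  rw [← card_pos]
  have := h.1
  have := le_card_sdiff s.toFinset A
  have := s.toFinset_card_le
  omega

lemma IsCode.leaf_eq_min' (h : IsCode (a :: s) A) :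
    leaf a s A = (A \ (a :: s).toFinset).min' h.sdiff_nonempty := by
  rw [leaf, ← coe_min' h.sdiff_nonempty, WithTop.untopD_coe]

lemma IsCode.leaf_mem_sdiff (h : IsCode (a :: s) A) : leaf a s A ∈ A \ (a :: s).toFinset := by
  rw [h.leaf_eq_min']
  exact min'_mem _ _

lemma IsCode.leaf_mem (h : IsCode (a :: s) A) : leaf a s A ∈ A :=
  (mem_sdiff.1 h.leaf_mem_sdiff).1

lemma IsCode.leaf_not_mem (h : IsCode (a :: s) A) : leaf a s A ∉ a :: s := by
  simpa using (mem_sdiff.1 h.leaf_mem_sdiff).2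

lemma IsCode.tail (h : IsCode (a :: s) A) : IsCode s (A.erase (leaf a s A)) := by
  refine ⟨?_, fun x hx => mem_erase.2 ⟨?_, h.2 x (List.mem_cons_of_mem a hx)⟩⟩
  · rw [card_erase_of_mem h.leaf_mem, ← h.1]
    simp
  · rintro rfl
    exact h.leaf_not_mem (List.mem_cons_of_mem a hx)

lemma IsCode.leaf_ne (h : IsCode (a :: s) A) : leaf a s A ≠ a := fun h' =>
  h.leaf_not_mem (by rw [h']; exact List.mem_cons_self)

lemma edges_subset (h : IsCode s A) : edges s A ⊆ A.sym2.filter fun e => ¬e.IsDiag := by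
  induction s generalizing A with
  | nil => exact subset_rfl
  | cons a s ih =>
    refine insert_subset ?_ ((ih h.tail).trans ?_)
    · simp [h.leaf_mem, h.2 a List.mem_cons_self, h.leaf_ne]
    · exact filter_subset_filter _ (sym2_mono (erase_subset _ _))

lemma mem_of_mem_edges (h : IsCode s A) {e : Sym2 α} (he : e ∈ edges s A) {x : α}
    (hx : x ∈ e) : x ∈ A :=
  mem_sym2_iff.1 (mem_filter.1 (edges_subset h he)).1 x hx

lemma not_isDiag_of_mem_edges (h : IsCode s A) {e : Sym2 α} (he : e ∈ edges s A) :
    ¬e.IsDiag :=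
  (mem_filter.1 (edges_subset h he)).2

lemma leaf_not_mem_of_mem_edges_tail (h : IsCode (a :: s) A) {e : Sym2 α}
    (he : e ∈ edges s (A.erase (leaf a s A))) : leaf a s A ∉ e := fun hl =>
  (mem_erase.1 (mem_of_mem_edges h.tail he hl)).1 rfl

lemma edges_nil (h : #A = 2) : ∃ x y, x ≠ y ∧ A = {x, y} ∧ edges [] A = {s(x, y)} := by
  obtain ⟨x, y, hxy, rfl⟩ := card_eq_two.1 h
  refine ⟨x, y, hxy, rfl, ?_⟩
  ext e
  induction e using Sym2.ind
  simp only [edges, mem_filter, mk_mem_sym2_iff, mem_insert, mem_singleton,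
    Sym2.mk_isDiag_iff, Sym2.eq_iff]
  aesop

lemma edges_cons (a : α) (s : List α) (A : Finset α) :
    edges (a :: s) A = insert s(leaf a s A, a) (edges s (A.erase (leaf a s A))) := rfl

lemma IsCode.filter_leaf_mem_edges (h : IsCode (a :: s) A) :
    {e ∈ edges (a :: s) A | leaf a s A ∈ e} = {s(leaf a s A, a)} := by
  rw [edges_cons, filter_insert, if_pos (Sym2.mem_mk_left _ _),
    filter_false_of_mem fun e he => leaf_not_mem_of_mem_edges_tail h he]
  rfl

lemma IsCode.edges_tail (h : IsCode (a :: s) A) :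
    edges s (A.erase (leaf a s A)) = (edges (a :: s) A).erase s(leaf a s A, a) := by
  rw [edges_cons, erase_insert fun he => leaf_not_mem_of_mem_edges_tail h he (Sym2.mem_mk_left _ _)]

lemma card_filter_mem_edges (h : IsCode s A) {v : α} (hv : v ∈ A) :
    #{e ∈ edges s A | v ∈ e} = s.count v + 1 := by
  induction s generalizing A with
  | nil =>
    obtain ⟨x, y, -, rfl, hE⟩ := edges_nil h.1.symm
    have : v ∈ s(x, y) := by simpa using hv
    simp [hE, filter_singleton, this]
  | cons a s ih =>
    by_cases hvl : v = leaf a s A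
    · subst hvl
      rw [h.filter_leaf_mem_edges, List.count_eq_zero.2 h.leaf_not_mem, card_singleton]
    have ih := ih h.tail (mem_erase.2 ⟨hvl, hv⟩)
    rw [edges_cons, filter_insert]
    by_cases hva : v = a
    · subst hva
      rw [if_pos (Sym2.mem_mk_right _ _), card_insert_of_notMem, ih, List.count_cons_self]
      exact fun he => leaf_not_mem_of_mem_edges_tail h (mem_filter.1 he).1 (Sym2.mem_mk_left _ _)
    · rw [if_neg (by simp [hvl, hva]), ih, List.count_cons_of_ne (Ne.symm hva)]

lemma IsCode.sdiff_toFinset_eq (h : IsCode s A) :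
    A \ s.toFinset = {v ∈ A | #{e ∈ edges s A | v ∈ e} = 1} := by
  ext v
  simp only [mem_sdiff, mem_filter, List.mem_toFinset]
  refine and_congr_right fun hv => ?_
  rw [card_filter_mem_edges h hv, ← List.count_eq_zero]
  omega

/- The vertices missing from the code are the leaves of the decoded tree, so the first leaf removed
and its neighbour, the first entry of the code, can be read off the edges. -/
theorem edges_injOn (hs : IsCode s A) (ht : IsCode t A)
    (hst : edges s A = edges t A) : s = t := by
  have hlen : s.length = t.length := by have := hs.1; have := ht.1; omega
  induction s generalizing t A with
  | nil => exact (List.length_eq_zero_iff.1 hlen.symm).symm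
  | cons a s ih =>
    obtain _ | ⟨b, t⟩ := t
    · simp at hlen
    have hleaf : leaf a s A = leaf b t A := by
      have := hs.sdiff_toFinset_eq.trans (hst ▸ ht.sdiff_toFinset_eq.symm)
      rw [hs.leaf_eq_min', ht.leaf_eq_min']
      simp_rw [this]
    have hab : a = b := by
      have := hs.filter_leaf_mem_edges.symm.trans (hst ▸ hleaf ▸ ht.filter_leaf_mem_edges)
      exact Sym2.congr_right.1 (singleton_injective this)
    subst hab
    refine congrArg _ (ih hs.tail (hleaf ▸ ht.tail) ?_ (by simpa using hlen))
    rw [hs.edges_tail, hleaf, ht.edges_tail, hst]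

/- Vertices are numbered in reverse order of removal: a removed leaf gets a larger number than its
neighbour, which is removed later. -/
theorem IsCode.exists_parent_labelling (h : IsCode s A) :
    ∃ g : α → ℕ, ∃ p : ℕ → ℕ, Set.InjOn g A ∧ (∀ x ∈ A, g x < #A) ∧
      (∀ i, 0 < i → p i < i) ∧ ∀ e ∈ edges s A, IsParentEdge p (e.map g) := by
  induction s generalizing A with
  | nil =>
    obtain ⟨x, y, hxy, rfl, hE⟩ := edges_nil h.1.symm
    refine ⟨fun v => if v = x then 0 else 1, fun _ => 0, ?_, ?_, fun i hi => hi, ?_⟩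
    · rw [coe_pair, Set.injOn_pair]
      simp [hxy.symm]
    · simp [card_pair hxy, hxy.symm]
    · simp only [hE, mem_singleton, forall_eq, Sym2.map_mk, if_pos, if_neg hxy.symm]
      exact ⟨1, one_pos, Sym2.eq_swap⟩
  | cons a s ih =>
    obtain ⟨g, p, hinj, hlt, hp, hE⟩ := ih h.tail
    have hN : #(A.erase (leaf a s A)) = s.length + 2 := h.tail.1.symm
    have ha : a ∈ A.erase (leaf a s A) :=
      mem_erase.2 ⟨h.leaf_ne.symm, h.2 a List.mem_cons_self⟩
    set l := leaf a s A
    have hlt' {x} (hx : x ∈ A) (hxl : x ≠ l) : g x < s.length + 2 :=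
      hN ▸ hlt x (mem_erase.2 ⟨hxl, hx⟩)
    refine ⟨Function.update g l (s.length + 2), Function.update p (s.length + 2) (g a),
      ?_, ?_, ?_, ?_⟩
    · intro x hx y hy hxy
      rcases eq_or_ne x l with rfl | hxl <;> rcases eq_or_ne y l with rfl | hyl
      · rfl
      · have := hlt' hy hyl; simp_all
      · have := hlt' hx hxl; simp_all
      · simp only [Function.update_of_ne hxl, Function.update_of_ne hyl] at hxy
        exact hinj (mem_erase.2 ⟨hxl, hx⟩) (mem_erase.2 ⟨hyl, hy⟩) hxy
    · intro x hx
      rw [← h.1, List.length_cons]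
      rcases eq_or_ne x l with rfl | hxl
      · simp
      · have := hlt' hx hxl
        rw [Function.update_of_ne hxl]; omega
    · intro i hi
      rcases eq_or_ne i (s.length + 2) with rfl | hiN
      · simpa [← hN] using hlt a ha
      · rw [Function.update_of_ne hiN]; exact hp i hi
    · intro e he
      rw [edges_cons, mem_insert] at he
      rcases he with rfl | he
      · refine ⟨s.length + 2, by omega, ?_⟩
        simp [l, Function.update_of_ne h.leaf_ne.symm]
      · obtain ⟨i, hi, hei⟩ := hE e he
        have hie : i ∈ e.map g := hei ▸ Sym2.mem_mk_left _ _
        obtain ⟨x, hx, rfl⟩ := Sym2.mem_map.1 hie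
        have hxA := mem_of_mem_edges h.tail he hx
        refine ⟨g x, hi, ?_⟩
        rw [Function.update_of_ne (hN ▸ hlt x hxA).ne, ← hei]
        exact Sym2.map_congr fun y hy =>
          Function.update_of_ne (by rintro rfl; exact leaf_not_mem_of_mem_edges_tail h he hy) _ _

def tree (s : List α) (A : Finset α) : SimpleGraph α :=
  SimpleGraph.fromEdgeSet (edges s A)

lemma IsCode.edgeSet_tree (h : IsCode s A) : (tree s A).edgeSet = edges s A := by
  rw [tree, SimpleGraph.edgeSet_fromEdgeSet, sdiff_eq_left, Set.disjoint_left]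
  exact fun e he => not_isDiag_of_mem_edges h he

theorem IsCode.tree_injOn (hs : IsCode s A) (ht : IsCode t A) (hst : tree s A = tree t A) :
    s = t := by
  refine edges_injOn hs ht (Finset.coe_injective ?_)
  rw [← hs.edgeSet_tree, ← ht.edgeSet_tree, hst]

lemma isCode_ofFn {m : ℕ} (hm : 2 ≤ m) (σ : Fin (m - 2) → Fin m) :
    IsCode (List.ofFn σ) univ :=
  ⟨by rw [List.length_ofFn, card_univ, Fintype.card_fin]; omega, by simp⟩

theorem tree_ofFn_injective {m : ℕ} :
    Function.Injective fun σ : Fin (m - 2) → Fin m => tree (List.ofFn σ) univ := by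
  intro σ τ h
  by_cases hm : 2 ≤ m
  · exact List.ofFn_injective ((isCode_ofFn hm σ).tree_injOn (isCode_ofFn hm τ) h)
  · exact funext fun i => absurd i.isLt (by omega)

end Prufer

section extendGraph

variable {m : ℕ} {G : SimpleGraph (Fin m)} {S : Finset (Fin m)}

lemma extendGraph_adj_castSucc {a b : Fin m} :
    (extendGraph G S).Adj a.castSucc b.castSucc ↔ G.Adj a b := by
  simp only [extendGraph, SimpleGraph.fromRel_adj, ne_eq, Fin.castSucc_inj,
    Fin.castSucc_ne_last, false_and, or_false, exists_and_left, exists_eq_left']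
  exact ⟨fun h => h.2.elim id fun h' => h'.symm, fun h => ⟨h.ne, .inl h⟩⟩

lemma extendGraph_adj_last {b : Fin m} :
    (extendGraph G S).Adj (Fin.last m) b.castSucc ↔ b ∈ S := by
  have (a : Fin m) : Fin.last m ≠ a.castSucc := (Fin.castSucc_ne_last a).symm
  simp [extendGraph, this]

lemma extendGraph_eq {H : SimpleGraph (Fin (m + 1))}
    (hG : ∀ a b, H.Adj a.castSucc b.castSucc ↔ G.Adj a b)
    (hS : ∀ b, H.Adj (Fin.last m) b.castSucc ↔ b ∈ S) : extendGraph G S = H := by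
  ext u v
  induction u using Fin.lastCases <;> induction v using Fin.lastCases
  · simp
  · rw [extendGraph_adj_last, hS]
  · rw [SimpleGraph.adj_comm, extendGraph_adj_last, H.adj_comm, hS]
  · rw [extendGraph_adj_castSucc, hG]

end extendGraph

/- The first `k - 1` vertices are apexes; the others carry the tree with parent map `p`, shifted
by `k - 1`. -/
def apexParentGraph (k : ℕ) (p : ℕ → ℕ) : SimpleGraph ℕ :=
  SimpleGraph.fromRel fun a b => a < k - 1 ∨ ∃ i, 0 < i ∧ a = k - 1 + i ∧ b = k - 1 + p i

section apexParentGraph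

variable {k : ℕ} {p : ℕ → ℕ}

lemma apexParentGraph_adj_of_lt {a b : ℕ} (ha : a < k - 1) (hab : a ≠ b) :
    (apexParentGraph k p).Adj a b :=
  ⟨hab, .inl (.inl ha)⟩

lemma apexParentGraph_adj_of_isParentEdge (hp : ∀ i, 0 < i → p i < i) {x y : ℕ}
    (h : IsParentEdge p s(x, y)) : (apexParentGraph k p).Adj (k - 1 + x) (k - 1 + y) := by
  obtain ⟨i, hi, hxy⟩ := h
  have := hp i hi
  rcases Sym2.eq_iff.1 hxy with ⟨hx, hy⟩ | ⟨hx, hy⟩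
  · exact ⟨by omega, .inl (.inr ⟨i, hi, by rw [hx], by rw [hy]⟩)⟩
  · exact ⟨by omega, .inr (.inr ⟨i, hi, by rw [hy], by rw [hx]⟩)⟩

lemma apexParentGraph_adj_iff_of_lt (hp : ∀ i, 0 < i → p i < i) {j b : ℕ} (hj : 0 < j)
    (hb : b < k - 1 + j) :
    (apexParentGraph k p).Adj (k - 1 + j) b ↔ b < k - 1 ∨ b = k - 1 + p j := by
  have := hp j hj
  constructor
  · rintro ⟨-, (h | ⟨i, -, hi, rfl⟩) | (h | ⟨i, hi, rfl, h⟩)⟩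
    · omega
    · exact .inr (by rw [show i = j by omega])
    · exact .inl h
    · have := hp i hi; omega
  · rintro (h | rfl)
    · exact (apexParentGraph_adj_of_lt h (by omega)).symm
    · exact ⟨by omega, .inl (.inr ⟨j, hj, rfl, rfl⟩)⟩

theorem isKTreeConstr_apexParentGraph (hk : 0 < k) (hp : ∀ i, 0 < i → p i < i) {N : ℕ}
    (hN : k + 1 ≤ N) : IsKTreeConstr k N ((apexParentGraph k p).comap Fin.val) := by
  induction N, hN using Nat.le_induction with
  | base =>
    convert IsKTreeConstr.base
    ext u v
    refine ⟨SimpleGraph.Adj.ne, fun huv => ?_⟩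
    have huv' : u.val ≠ v.val := Fin.val_ne_of_ne huv
    simp only [SimpleGraph.comap_adj]
    by_cases hu : u.val < k - 1
    · exact apexParentGraph_adj_of_lt hu huv'
    by_cases hv : v.val < k - 1
    · exact (apexParentGraph_adj_of_lt hv huv'.symm).symm
    have h1 : IsParentEdge p s(1, 0) :=
      ⟨1, one_pos, by rw [show p 1 = 0 by have := hp 1; omega]⟩
    rcases (by omega : u.val = k - 1 + 1 ∧ v.val = k - 1 + 0 ∨
        u.val = k - 1 + 0 ∧ v.val = k - 1 + 1) with ⟨hu, hv⟩ | ⟨hu, hv⟩ <;>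
      simp only [hu, hv]
    · exact apexParentGraph_adj_of_isParentEdge hp h1
    · exact (apexParentGraph_adj_of_isParentEdge hp h1).symm
  | succ N hN ih =>
    obtain ⟨j, rfl⟩ : ∃ j, N = k - 1 + j := ⟨N - (k - 1), by omega⟩
    have hj : 0 < j := by omega
    have hpj := hp j hj
    let w : Fin (k - 1 + j) := ⟨k - 1 + p j, by omega⟩
    let S : Finset (Fin (k - 1 + j)) := insert w (univ.filter fun b => b.val < k - 1)
    have hS : ∀ b : Fin (k - 1 + j), (apexParentGraph k p).Adj (k - 1 + j) b ↔ b ∈ S := by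
      intro b
      rw [apexParentGraph_adj_iff_of_lt hp hj b.isLt]
      simp [S, w, Fin.ext_iff, or_comm]
    have hcard : #S = k := by
      rw [card_insert_of_notMem (by simp [w]), Fin.card_filter_val_lt]
      omega
    have hclique : ((apexParentGraph k p).comap Fin.val).IsClique (S : Set (Fin (k - 1 + j))) := by
      intro u hu v hv huv
      simp only [S, coe_insert, coe_filter, mem_univ, true_and, Set.mem_insert_iff] at hu hv
      rcases hu with rfl | hu
      · rcases hv with rfl | hv
        · exact absurd rfl huv
        · exact (apexParentGraph_adj_of_lt hv (Fin.val_ne_of_ne huv).symm).symm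
      · exact apexParentGraph_adj_of_lt hu (Fin.val_ne_of_ne huv)
    rw [← extendGraph_eq (G := (apexParentGraph k p).comap Fin.val)
      (H := (apexParentGraph k p).comap Fin.val) (fun a b => Iff.rfl) hS]
    exact ih.step S hcard hclique

end apexParentGraph

open scoped SimpleGraph

def attachApexes {ι β : Type*} (B : Set (ι × β)) (T : SimpleGraph β) :
    SimpleGraph (ι ⊕ β) where
  Adj
    | .inl i, .inr t | .inr t, .inl i => (i, t) ∈ B
    | .inr x, .inr y => T.Adj x y
    | .inl _, .inl _ => False
  symm := ⟨by rintro (_ | _) (_ | _) h <;> first | exact h | exact h.symm⟩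
  loopless := ⟨by rintro (_ | _) h <;> first | exact h | exact T.loopless.irrefl _ h⟩

lemma attachApexes_injective2 {ι β : Type*} : Function.Injective2 (@attachApexes ι β) := by
  intro B B' T T' h
  have hadj := congrArg SimpleGraph.Adj h
  constructor
  · ext ⟨i, t⟩
    exact iff_of_eq (congrFun (congrFun hadj (.inl i)) (.inr t))
  · ext x y
    exact iff_of_eq (congrFun (congrFun hadj (.inr x)) (.inr y))

lemma IsPartialKTree.of_isContained {k n N : ℕ} {G : SimpleGraph (Fin n)}
    {H : SimpleGraph (Fin N)} (hH : IsKTreeConstr k N H) (hGH : G ⊑ H) : IsPartialKTree k G :=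
  let ⟨f⟩ := hGH
  ⟨N, H, f.toEmbedding, hH, fun _ _ h => f.toHom.map_rel h⟩

lemma isPartialKTree_of_le_succ {k n : ℕ} (hn : n ≤ k + 1) (G : SimpleGraph (Fin n)) :
    IsPartialKTree k G :=
  .of_isContained .base <| (SimpleGraph.IsContained.of_le le_top).trans
    ⟨(SimpleGraph.Embedding.completeGraph (Fin.castLEEmb hn)).toCopy⟩

theorem attachApexes_isContained_apexParentGraph {k m : ℕ} {p : ℕ → ℕ}
    (hp : ∀ i, 0 < i → p i < i) (B : Set (Fin (k - 1) × Fin m)) {T : SimpleGraph (Fin m)}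
    {π : Fin m → Fin m} (hπ : Function.Injective π)
    (hT : ∀ x y, T.Adj x y → IsParentEdge p s((π x : ℕ), π y)) :
    attachApexes B T ⊑ (apexParentGraph k p).comap (Fin.val : Fin (k - 1 + m) → ℕ) := by
  let f : Fin (k - 1) ⊕ Fin m → Fin (k - 1 + m) := finSumFinEquiv ∘ Sum.map id π
  refine ⟨SimpleGraph.Hom.toCopy ⟨f, fun {u v} huv => ?_⟩
    (finSumFinEquiv.injective.comp (Function.injective_id.sumMap hπ))⟩
  rcases u with i | x <;> rcases v with i' | y
  · exact huv.elim
  · exact apexParentGraph_adj_of_lt (by simp [f]) (by simp [f]; omega)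
  · exact (apexParentGraph_adj_of_lt (by simp [f]) (by simp [f]; omega)).symm
  · simpa [f] using apexParentGraph_adj_of_isParentEdge hp (hT x y huv)

theorem isPartialKTree_attachApexes_tree {k m : ℕ} (hk : 0 < k) (B : Set (Fin (k - 1) × Fin m))
    (σ : Fin (m - 2) → Fin m) :
    IsPartialKTree k
      (finSumFinEquiv.simpleGraph (attachApexes B (Prufer.tree (List.ofFn σ) univ))) := by
  by_cases hm : 2 ≤ m
  · obtain ⟨g, p, hg, hlt, hp, hE⟩ := (Prufer.isCode_ofFn hm σ).exists_parent_labelling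
    let π (v : Fin m) : Fin m := ⟨g v, by simpa using hlt v (mem_univ v)⟩
    have hπ : Function.Injective π := fun u v h => hg (by simp) (by simp) (congrArg Fin.val h)
    refine .of_isContained (isKTreeConstr_apexParentGraph hk hp (by omega)) <|
      (SimpleGraph.isContained_congr_left (SimpleGraph.Iso.comap _ _)).2 <|
      attachApexes_isContained_apexParentGraph hp B hπ fun u v h => ?_
    exact hE _ ((SimpleGraph.fromEdgeSet_adj _).1 h).1
  · exact isPartialKTree_of_le_succ (by omega) _

theorem pow_mul_two_pow_le_numPartialKTrees {k m : ℕ} (hk : 0 < k) :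
    m ^ (m - 2) * 2 ^ ((k - 1) * m) ≤ numPartialKTrees (k - 1 + m) k := by
  let F (x : (Fin (m - 2) → Fin m) × Set (Fin (k - 1) × Fin m)) :
      SimpleGraph (Fin (k - 1 + m)) :=
    finSumFinEquiv.simpleGraph (attachApexes x.2 (Prufer.tree (List.ofFn x.1) univ))
  have hF : Function.Injective F := fun x y h => by
    obtain ⟨hB, hT⟩ := attachApexes_injective2 (Equiv.injective _ h)
    exact Prod.ext (Prufer.tree_ofFn_injective hT) hB
  calc m ^ (m - 2) * 2 ^ ((k - 1) * m)
      = Nat.card ((Fin (m - 2) → Fin m) × Set (Fin (k - 1) × Fin m)) := by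
        simp [Nat.card_eq_fintype_card, Fintype.card_set, mul_comm]
    _ ≤ numPartialKTrees (k - 1 + m) k :=
        Nat.card_le_card_of_injective
          (fun x => ⟨F x, isPartialKTree_attachApexes_tree hk x.2 x.1⟩)
          fun x y h => hF (congrArg Subtype.val h)

/-- For `0 < k ≤ n`, the number of labeled partial `k`-trees on `{1,…,n}` is at least
`(n−k+1)^(n−k−1) · 2^((k−1)(n−k+1))` (for `n = k` the first factor is `1^(−1) = 1`,
interpreted as an integer power). -/
theorem numPartialKTrees_lower_apex (n k : ℕ) (hk : 0 < k) (hkn : k ≤ n) :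
    ((n : ℝ) - (k : ℝ) + 1) ^ ((n : ℤ) - (k : ℤ) - 1) * (2 : ℝ) ^ ((k - 1) * (n - k + 1)) ≤
      (numPartialKTrees n k : ℝ) := by
  obtain ⟨m, rfl⟩ : ∃ m, n = k - 1 + m := ⟨n - (k - 1), by omega⟩
  have hm : 0 < m := by omega
  have hbase : ((↑(k - 1 + m) : ℝ) - k + 1) = m := by
    rw [Nat.cast_add, Nat.cast_sub hk]; ring
  have hzpow : (m : ℝ) ^ (((k - 1 + m : ℕ) : ℤ) - k - 1) = ((m ^ (m - 2) : ℕ) : ℝ) := by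
    rcases (by omega : m = 1 ∨ 2 ≤ m) with rfl | hm2
    · simp
    · rw [show ((k - 1 + m : ℕ) : ℤ) - k - 1 = ((m - 2 : ℕ) : ℤ) by omega, zpow_natCast,
        Nat.cast_pow]
  rw [hbase, hzpow, show k - 1 + m - k + 1 = m by omega]
  exact_mod_cast pow_mul_two_pow_le_numPartialKTrees hk
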